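/- arXiv:2411.19364 — 2 statements merged into one kernel-verified Lean document; each statement's English description precedes it below -/
import Mathlib

section
/- Let l > 1 be an integer and let m ≥ m′ ≥ 1 be integers. Then ‖l^m + l^{m′}‖_l = m + 1. -/
/-- `CanRepr l n m` means `n` can be expressed using exactly `m` copies of `l`
    combined with addition and multiplication (and parentheses). -/
inductive CanRepr (l : ℕ) : ℕ → ℕ → Prop
  | base : CanRepr l l 1
  | add {a b p q : ℕ} : CanRepr l a p → CanRepr l b q → CanRepr l (a + b) (p + q)
  | mul {a b p q : ℕ} : CanRepr l a p → CanRepr l b q → CanRepr l (a * b) (p + q)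

/-- The `l`-complexity `‖n‖_l`: the minimal number of `l`'s needed to express `n`
    using only addition and multiplication. (By convention `sInf ∅ = 0`.) -/
noncomputable def complexity (l n : ℕ) : ℕ := sInf {m | CanRepr l n m}

/-!
The expression `l ^ (m' - 1) * (l ^ (m - m' + 1) + l)` uses `m + 1` copies of `l`. Conversely, an
expression with `k` copies of `l > 1` has value at most `l ^ k` (as `a + b ≤ a * b` for
`a, b ≥ 2`), and `l ^ m < l ^ m + l ^ m'`, so no expression with `m` copies suffices.
-/

namespace CanRepr

variable {l : ℕ}

theorem pow {k : ℕ} (hk : 1 ≤ k) : CanRepr l (l ^ k) k := by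
  induction k, hk using Nat.le_induction with
  | base => simpa using base
  | succ k _ ih => simpa [pow_succ] using ih.mul base

theorem pow_mul {x p : ℕ} (h : CanRepr l x p) (a : ℕ) : CanRepr l (l ^ a * x) (a + p) := by
  induction a with
  | zero => simpa using h
  | succ a ih =>
    have h' := base.mul ih
    rwa [← mul_assoc, ← pow_succ', add_comm 1, add_right_comm] at h'

theorem pow_add_pow {m m' : ℕ} (hm : m' ≤ m) (hm' : 1 ≤ m') :
    CanRepr l (l ^ m + l ^ m') (m + 1) := by
  obtain ⟨d, rfl⟩ := Nat.exists_eq_add_of_le hm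
  obtain ⟨e, rfl⟩ := Nat.exists_eq_add_of_le' hm'
  have h := ((pow (l := l) (Nat.le_add_left 1 d)).add base).pow_mul e
  convert h using 1 <;> ring

theorem one_le {n k : ℕ} (h : CanRepr l n k) : 1 ≤ k := by
  induction h <;> omega

theorem le_pow {n k : ℕ} (hl : 1 < l) (h : CanRepr l n k) : n ≤ l ^ k := by
  induction h with
  | base => simp
  | @add a b p q ha hb iha ihb =>
    have two_le_pow {c r : ℕ} (hr : CanRepr l c r) : 2 ≤ l ^ r :=
      hl.trans_le (Nat.le_self_pow (Nat.one_le_iff_ne_zero.mp hr.one_le) l)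
    calc a + b ≤ l ^ p + l ^ q := Nat.add_le_add iha ihb
      _ ≤ l ^ p * l ^ q := Nat.add_le_mul (two_le_pow ha) (two_le_pow hb)
      _ = l ^ (p + q) := (pow_add l p q).symm
  | @mul a b p q _ _ iha ihb =>
    calc a * b ≤ l ^ p * l ^ q := Nat.mul_le_mul iha ihb
      _ = l ^ (p + q) := (pow_add l p q).symm

end CanRepr

theorem stmt_3 (l m m' : ℕ) (hl : 1 < l) (hm : m' ≤ m) (hm' : 1 ≤ m') :
    complexity l (l ^ m + l ^ m') = m + 1 := by
  have hrepr := CanRepr.pow_add_pow (l := l) hm hm'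
  refine le_antisymm (Nat.sInf_le hrepr) (le_csInf ⟨_, hrepr⟩ fun k hk => ?_)
  have hlt : l ^ m < l ^ k :=
    (Nat.lt_add_of_pos_right (Nat.pow_pos (by omega))).trans_le (hk.le_pow hl)
  exact (Nat.pow_lt_pow_iff_right (by omega)).mp hlt
end

section
/- Let l > 1 be an integer and let n be a positive multiple of l. Write n = b + a·l uniquely where b is a nonnegative multiple of l² and 0 ≤ a ≤ l − 1. Then ‖n‖_l = ‖b‖_l + a, where by convention ‖0‖_l = 0. -/
/-!
Let `F(n) = ‖l² ⌊n / l²⌋‖_l + (n mod l²) / l` (`splitCost l n`), the cost of writing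
`n = b + a·l` with `l² ∣ b`, `a < l` directly. Clearly `‖n‖_l ≤ F(n)`. Conversely `F(l) = 1`,
and `F` is subadditive and submultiplicative on multiples of `l`: in a sum, a carry of the last
digit trades `l` copies of `l` for `l²`, which costs at most `2 ≤ l`; a product is divisible by
`l²`, so `F(xy) = ‖xy‖_l ≤ ‖x‖_l + ‖y‖_l ≤ F(x) + F(y)`. By induction on expressions,
`F(n) ≤ ‖n‖_l`.
-/

section

variable {l n m : ℕ}

namespace CanRepr

theorem dvd (h : CanRepr l n m) : l ∣ n := by
  induction h with
  | base => exact dvd_rfl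
  | add _ _ hx hy => exact dvd_add hx hy
  | mul _ _ hx _ => exact hx.mul_right _

theorem pos (hl : 0 < l) (h : CanRepr l n m) : 0 < n := by
  induction h with
  | base => exact hl
  | add _ _ hx _ => exact Nat.add_pos_left hx _
  | mul _ _ hx hy => exact Nat.mul_pos hx hy

theorem mul_self (l : ℕ) {k : ℕ} (hk : 0 < k) : CanRepr l (k * l) k := by
  induction k with
  | zero => omega
  | succ k ih =>
    rcases Nat.eq_zero_or_pos k with rfl | hk
    · simpa using base
    · simpa [Nat.succ_mul] using add (ih hk) base

end CanRepr

theorem complexity_le (h : CanRepr l n m) : complexity l n ≤ m :=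
  Nat.sInf_le h

theorem canRepr_complexity (hd : l ∣ n) (hn : 0 < n) : CanRepr l n (complexity l n) := by
  obtain ⟨k, rfl⟩ := hd
  rw [mul_comm] at hn ⊢
  exact Nat.sInf_mem ⟨k, CanRepr.mul_self l (Nat.pos_of_mul_pos_right hn)⟩

theorem complexity_zero (hl : 0 < l) : complexity l 0 = 0 := by
  have : {m | CanRepr l 0 m} = ∅ :=
    Set.eq_empty_of_forall_notMem fun _ h => (h.pos hl).ne rfl
  simp [complexity, this]

theorem complexity_add_le {x y : ℕ} (hx : l ∣ x) (hy : l ∣ y) :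
    complexity l (x + y) ≤ complexity l x + complexity l y := by
  rcases Nat.eq_zero_or_pos x with rfl | hx0
  · simp
  rcases Nat.eq_zero_or_pos y with rfl | hy0
  · simp
  exact complexity_le ((canRepr_complexity hx hx0).add (canRepr_complexity hy hy0))

theorem complexity_mul_le {x y : ℕ} (hl : 0 < l) (hx : l ∣ x) (hy : l ∣ y) :
    complexity l (x * y) ≤ complexity l x + complexity l y := by
  rcases Nat.eq_zero_or_pos x with rfl | hx0
  · simp [complexity_zero hl]
  rcases Nat.eq_zero_or_pos y with rfl | hy0
  · simp [complexity_zero hl]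
  exact complexity_le ((canRepr_complexity hx hx0).mul (canRepr_complexity hy hy0))

theorem complexity_mul_self_le (hl : 0 < l) (k : ℕ) : complexity l (k * l) ≤ k := by
  rcases Nat.eq_zero_or_pos k with rfl | hk
  · simp [complexity_zero hl]
  · exact complexity_le (CanRepr.mul_self l hk)

noncomputable def splitCost (l n : ℕ) : ℕ :=
  complexity l (l ^ 2 * (n / l ^ 2)) + n % l ^ 2 / l

theorem splitCost_add_mul {a b : ℕ} (hb : l ^ 2 ∣ b) (ha : a < l) :
    splitCost l (b + a * l) = complexity l b + a := by
  obtain ⟨k, rfl⟩ := hb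
  have hal : a * l < l ^ 2 := by rw [sq]; exact Nat.mul_lt_mul_of_pos_right ha (by omega)
  have hl2 : 0 < l ^ 2 := pow_pos (by omega) 2
  rw [splitCost, Nat.mul_add_div hl2, Nat.div_eq_of_lt hal, Nat.mul_add_mod,
    Nat.mod_eq_of_lt hal, Nat.mul_div_cancel a (by omega), add_zero]

theorem exists_eq_add_mul (hl : 0 < l) (hn : l ∣ n) :
    ∃ b a, l ^ 2 ∣ b ∧ a < l ∧ n = b + a * l := by
  refine ⟨l ^ 2 * (n / l ^ 2), n % l ^ 2 / l, dvd_mul_right _ _, ?_, ?_⟩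
  · rw [Nat.div_lt_iff_lt_mul hl, ← sq]
    exact Nat.mod_lt _ (by positivity)
  · have hmod : l ∣ n % l ^ 2 := (Nat.dvd_mod_iff (dvd_pow_self l two_ne_zero)).mpr hn
    rw [Nat.div_mul_cancel hmod, Nat.div_add_mod]

theorem complexity_le_splitCost (hl : 0 < l) (hn : l ∣ n) :
    complexity l n ≤ splitCost l n := by
  obtain ⟨b, a, hb, ha, rfl⟩ := exists_eq_add_mul hl hn
  rw [splitCost_add_mul hb ha]
  calc complexity l (b + a * l) ≤ complexity l b + complexity l (a * l) :=
        complexity_add_le ((dvd_pow_self l two_ne_zero).trans hb) (dvd_mul_left l a)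
    _ ≤ complexity l b + a := Nat.add_le_add_left (complexity_mul_self_le hl a) _

theorem splitCost_self (hl : 1 < l) : splitCost l l = 1 := by
  simpa [complexity_zero (zero_lt_one.trans hl)] using
    splitCost_add_mul (b := 0) (dvd_zero _) hl

theorem splitCost_add_le {x y : ℕ} (hl : 1 < l) (hx : l ∣ x) (hy : l ∣ y) :
    splitCost l (x + y) ≤ splitCost l x + splitCost l y := by
  have hl0 : 0 < l := zero_lt_one.trans hl
  obtain ⟨b₁, a₁, hb₁, ha₁, rfl⟩ := exists_eq_add_mul hl0 hx
  obtain ⟨b₂, a₂, hb₂, ha₂, rfl⟩ := exists_eq_add_mul hl0 hy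
  have hl2 : l ∣ l ^ 2 := dvd_pow_self l two_ne_zero
  have hb : complexity l (b₁ + b₂) ≤ complexity l b₁ + complexity l b₂ :=
    complexity_add_le (hl2.trans hb₁) (hl2.trans hb₂)
  rw [splitCost_add_mul hb₁ ha₁, splitCost_add_mul hb₂ ha₂]
  by_cases hcarry : a₁ + a₂ < l
  · rw [show b₁ + a₁ * l + (b₂ + a₂ * l) = b₁ + b₂ + (a₁ + a₂) * l by ring,
      splitCost_add_mul (dvd_add hb₁ hb₂) hcarry]
    omega
  · obtain ⟨c, hc⟩ : ∃ c, a₁ + a₂ = c + l := ⟨a₁ + a₂ - l, by omega⟩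
    have hsq : complexity l (l ^ 2) ≤ 2 := by
      simpa [sq] using complexity_le (CanRepr.base.mul (CanRepr.base (l := l)))
    have hcarried : complexity l (b₁ + b₂ + l ^ 2) ≤ complexity l (b₁ + b₂) + 2 :=
      (complexity_add_le (hl2.trans (dvd_add hb₁ hb₂)) hl2).trans
        (Nat.add_le_add_left hsq _)
    rw [show b₁ + a₁ * l + (b₂ + a₂ * l) = b₁ + b₂ + l ^ 2 + c * l by
        rw [sq]; linear_combination l * hc,
      splitCost_add_mul (dvd_add (dvd_add hb₁ hb₂) dvd_rfl) (by omega)]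
    omega

theorem splitCost_mul_le {x y : ℕ} (hl : 0 < l) (hx : l ∣ x) (hy : l ∣ y) :
    splitCost l (x * y) ≤ splitCost l x + splitCost l y := by
  have hxy : splitCost l (x * y) = complexity l (x * y) := by
    simpa using splitCost_add_mul (a := 0) (by rw [sq]; exact mul_dvd_mul hx hy) hl
  rw [hxy]
  exact (complexity_mul_le hl hx hy).trans
    (Nat.add_le_add (complexity_le_splitCost hl hx) (complexity_le_splitCost hl hy))

theorem CanRepr.splitCost_le (hl : 1 < l) (h : CanRepr l n m) : splitCost l n ≤ m := by
  induction h with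
  | base => exact (splitCost_self hl).le
  | add hx hy ihx ihy => exact (splitCost_add_le hl hx.dvd hy.dvd).trans (Nat.add_le_add ihx ihy)
  | mul hx hy ihx ihy =>
    exact (splitCost_mul_le (zero_lt_one.trans hl) hx.dvd hy.dvd).trans (Nat.add_le_add ihx ihy)

theorem complexity_eq_splitCost (hl : 1 < l) (hn : l ∣ n) : complexity l n = splitCost l n := by
  refine (complexity_le_splitCost (zero_lt_one.trans hl) hn).antisymm ?_
  rcases Nat.eq_zero_or_pos n with rfl | hn0
  · simp [splitCost]
  · exact (canRepr_complexity hn hn0).splitCost_le hl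

theorem complexity_add_mul {a b : ℕ} (hl : 1 < l) (hb : l ^ 2 ∣ b) (ha : a < l) :
    complexity l (b + a * l) = complexity l b + a := by
  have hn : l ∣ b + a * l := dvd_add ((dvd_pow_self l two_ne_zero).trans hb) (dvd_mul_left l a)
  rw [complexity_eq_splitCost hl hn, splitCost_add_mul hb ha]

end

theorem stmt_4_general (l n a b : ℕ) (hl : 1 < l)
    (hb : l ^ 2 ∣ b) (ha : a ≤ l - 1) (hsum : n = b + a * l) :
    complexity l n = complexity l b + a := by
  subst hsum
  exact complexity_add_mul hl hb (by omega)

theorem stmt_4 (l n a b : ℕ) (hl : 1 < l) (hn : 0 < n) (hdvd : l ∣ n)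
    (hb : l ^ 2 ∣ b) (ha : a ≤ l - 1) (hsum : n = b + a * l) :
    complexity l n = complexity l b + a :=
  stmt_4_general l n a b hl hb ha hsum
end
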